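/- Let B be a compact topological space and H a complex Hilbert space. Let U : B → B(H) be a strongly continuous map (for every x ∈ H the map b ↦ U(b)x is continuous) such that each U(b) is unitary, and let K : B → B(H) be a map, continuous in the operator norm, such that each K(b) is compact. Then each operator U(b)∘K(b)∘U(b)* is compact and the map b ↦ U(b)∘K(b)∘U(b)* is continuous in the operator norm. -/

import Mathlib

open Metric Set Filter Topology ContinuousLinearMap
open scoped InnerProduct

/-!
If `A b` is a uniformly bounded, strongly continuous family of operators and `T` is compact, then
`b ↦ A b * T` is norm continuous: the family is equicontinuous, so by Ascoli pointwise convergence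
is uniform on the compact set `closure (T '' closedBall 0 1)`. This handles `b ↦ U b * K b`. The
right factor `star (U b)` is moved to the left by taking adjoints,
`star (U b * K b * star (U b)) = U b * star (U b * K b)`, which is of the same form because the
adjoint of a compact operator is compact: `‖T† y‖ ^ 2 ≤ ‖T (T† y)‖ * ‖y‖` makes `T†` on the unit
ball uniformly controlled by the compact operator `T ∘L T†`.
-/

theorem TotallyBounded.image_of_uniform_control {α β γ : Type*} [PseudoMetricSpace β]
    [PseudoMetricSpace γ] {f : α → β} {g : α → γ} {s : Set α} (hg : TotallyBounded (g '' s))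
    (hfg : ∀ ε > 0, ∃ δ > 0, ∀ x ∈ s, ∀ y ∈ s, dist (g x) (g y) < δ → dist (f x) (f y) < ε) :
    TotallyBounded (f '' s) := by
  rw [Metric.totallyBounded_iff]
  intro ε hε
  obtain ⟨δ, hδ, hδε⟩ := hfg ε hε
  obtain ⟨u, hus, huf, hcover⟩ :=
    exists_subset_image_finite_and.mp (finite_approx_of_totallyBounded hg δ hδ)
  refine ⟨f '' u, huf.image f, ?_⟩
  rintro _ ⟨x, hx, rfl⟩
  obtain ⟨_, ⟨y, hyu, rfl⟩, hxy⟩ := mem_iUnion₂.mp (hcover (mem_image_of_mem g hx))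
  exact mem_iUnion₂.mpr ⟨f y, mem_image_of_mem f hyu, hδε x hx y (hus hyu) hxy⟩

theorem Equicontinuous.tendstoUniformlyOn_of_tendsto {ι X α : Type*} [TopologicalSpace X]
    [UniformSpace α] {F : ι → X → α} {f : X → α} {l : Filter ι} {S : Set X}
    (hF : Equicontinuous F) (hS : IsCompact S) (h : ∀ x ∈ S, Tendsto (F · x) l (𝓝 (f x))) :
    TendstoUniformlyOn F f l S := by
  have := (EquicontinuousOn.tendsto_uniformOnFun_iff_pi' (𝔖 := {S}) (by simpa)
    (by simpa using hF.equicontinuousOn S) l f).mpr (by simpa [tendsto_pi_nhds] using h)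
  exact UniformOnFun.tendsto_iff_tendstoUniformlyOn.mp this S rfl

section Adjoint

variable {𝕜 E F : Type*} [RCLike 𝕜] [NormedAddCommGroup E] [InnerProductSpace 𝕜 E]
  [CompleteSpace E] [NormedAddCommGroup F] [InnerProductSpace 𝕜 F] [CompleteSpace F]

theorem ContinuousLinearMap.norm_adjoint_apply_sq_le (T : E →L[𝕜] F) (y : F) :
    ‖(T†) y‖ ^ 2 ≤ ‖T ((T†) y)‖ * ‖y‖ := by
  rw [apply_norm_sq_eq_inner_adjoint_left, adjoint_adjoint]
  exact (RCLike.re_le_norm _).trans (norm_inner_le_norm _ _)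

theorem IsCompactOperator.adjoint {T : E →L[𝕜] F} (hT : IsCompactOperator T) :
    IsCompactOperator (T†) := by
  have hTT : IsCompactOperator (T ∘L T†) := hT.comp_clm (T†)
  rw [← coe_coe, isCompactOperator_iff_isCompact_closure_image_closedBall _ one_pos, coe_coe]
  refine (TotallyBounded.closure ?_).isCompact_of_isClosed isClosed_closure
  refine (hTT.isCompact_closure_image_closedBall 1).totallyBounded.subset subset_closure
    |>.image_of_uniform_control fun ε hε => ⟨ε ^ 2 / 2, by positivity, fun x hx y hy hxy => ?_⟩
  rw [mem_closedBall_zero_iff] at hx hy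
  rw [dist_eq_norm, ← map_sub, coe_coe, comp_apply] at hxy
  rw [dist_eq_norm, ← map_sub]
  have hsq : ‖(T†) (x - y)‖ ^ 2 < ε ^ 2 := calc
    _ ≤ ‖T ((T†) (x - y))‖ * ‖x - y‖ := T.norm_adjoint_apply_sq_le _
    _ ≤ ‖T ((T†) (x - y))‖ * 2 := by gcongr; exact (norm_sub_le x y).trans (by linarith)
    _ < ε ^ 2 := by linarith
  exact lt_of_pow_lt_pow_left₀ 2 hε.le hsq

end Adjoint

section StrongContinuity

variable {𝕜 E F G B : Type*} [RCLike 𝕜] [NormedAddCommGroup E] [NormedSpace 𝕜 E]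
  [NormedAddCommGroup F] [NormedSpace 𝕜 F] [NormedAddCommGroup G] [NormedSpace 𝕜 G]
  [TopologicalSpace B] {A : B → F →L[𝕜] G} {C : ℝ}

theorem continuous_comp_of_isCompactOperator (hA : ∀ b, ‖A b‖ ≤ C)
    (hAs : ∀ y, Continuous fun b => A b y) {T : E →L[𝕜] F} (hT : IsCompactOperator T) :
    Continuous fun b => (A b).comp T := by
  have hequi : Equicontinuous fun b => ⇑(A b) :=
    ((NormedSpace.equicontinuous_TFAE A).out 5 1).mp (⟨C, hA⟩ : ∃ C, ∀ b, ‖A b‖ ≤ C)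
  refine continuous_iff_continuousAt.mpr fun b₀ => Metric.tendsto_nhds.mpr fun ε hε => ?_
  have hunif := Metric.tendstoUniformlyOn_iff.mp
    (hequi.tendstoUniformlyOn_of_tendsto (hT.isCompact_closure_image_closedBall 1)
      fun y _ => (hAs y).tendsto b₀) (ε / 2) (by positivity)
  filter_upwards [hunif] with b hb
  rw [dist_eq_norm]
  refine lt_of_le_of_lt (opNorm_le_of_unit_norm (by positivity) fun x hx => ?_) (half_lt_self hε)
  rw [sub_apply, comp_apply, comp_apply, ← dist_eq_norm, dist_comm]
  exact (hb (T x) (subset_closure (mem_image_of_mem T (mem_closedBall_zero_iff.mpr hx.le)))).le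

theorem continuous_comp_of_forall_isCompactOperator (hA : ∀ b, ‖A b‖ ≤ C)
    (hAs : ∀ y, Continuous fun b => A b y) {K : B → E →L[𝕜] F}
    (hK : ∀ b, IsCompactOperator (K b)) (hKc : Continuous K) :
    Continuous fun b => (A b).comp (K b) := by
  refine continuous_iff_continuousAt.mpr fun b₀ => ?_
  have hsplit : (fun b => (A b).comp (K b))
      = fun b => (A b).comp (K b - K b₀) + (A b).comp (K b₀) := by
    funext b
    rw [comp_sub, sub_add_cancel]
  have hsmall : Tendsto (fun b => (A b).comp (K b - K b₀)) (𝓝 b₀) (𝓝 0) :=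
    squeeze_zero_norm
      (fun b => (opNorm_comp_le _ _).trans (mul_le_mul_of_nonneg_right (hA b) (norm_nonneg _)))
      (by simpa using ((hKc.tendsto b₀).sub_const (K b₀)).norm.const_mul C)
  have hfixed := (continuous_comp_of_isCompactOperator hA hAs (hK b₀)).tendsto b₀
  simpa [ContinuousAt, hsplit] using hsmall.add hfixed

end StrongContinuity

theorem unitary_conj_compact_continuous_general
    {B : Type*} [TopologicalSpace B]
    {H : Type*} [NormedAddCommGroup H] [InnerProductSpace ℂ H] [CompleteSpace H]
    (U : B → (H →L[ℂ] H))
    (hU : ∀ b, star (U b) * U b = 1 ∧ U b * star (U b) = 1)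
    (hstrong : ∀ x : H, Continuous fun b => U b x)
    (K : B → (H →L[ℂ] H)) (hKcompact : ∀ b, IsCompactOperator (K b))
    (hKcont : Continuous K) :
    (∀ b, IsCompactOperator (U b * K b * star (U b))) ∧
      Continuous fun b => U b * K b * star (U b) := by
  have hU_norm : ∀ b, ‖U b‖ ≤ 1 := fun b => (U b).opNorm_le_bound zero_le_one fun x => by
    rw [norm_map_of_mem_unitary (Unitary.mem_iff.mpr (hU b)), one_mul]
  have hUK_compact : ∀ b, IsCompactOperator (U b * K b) := fun b => (hKcompact b).clm_comp (U b)
  have hUK_cont : Continuous fun b => U b * K b :=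
    continuous_comp_of_forall_isCompactOperator hU_norm hstrong hKcompact hKcont
  have hconj_star_cont : Continuous fun b => U b * star (U b * K b) :=
    continuous_comp_of_forall_isCompactOperator hU_norm hstrong
      (fun b => (hUK_compact b).adjoint) (continuous_star.comp hUK_cont)
  refine ⟨fun b => (hUK_compact b).comp_clm (star (U b)), ?_⟩
  exact (continuous_star.comp hconj_star_cont).congr fun b => by
    simp only [Function.comp_apply, star_mul, star_star, mul_assoc]

/-- Conjugating a norm-continuous family of compact operators by a strongly continuous
family of unitaries (over a compact parameter space) yields a norm-continuous family of
compact operators. -/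
theorem unitary_conj_compact_continuous
    {B : Type*} [TopologicalSpace B] [CompactSpace B]
    {H : Type*} [NormedAddCommGroup H] [InnerProductSpace ℂ H] [CompleteSpace H]
    (U : B → (H →L[ℂ] H))
    (hU : ∀ b, star (U b) * U b = 1 ∧ U b * star (U b) = 1)
    (hstrong : ∀ x : H, Continuous fun b => U b x)
    (K : B → (H →L[ℂ] H)) (hKcompact : ∀ b, IsCompactOperator (K b))
    (hKcont : Continuous K) :
    (∀ b, IsCompactOperator (U b * K b * star (U b))) ∧
      Continuous fun b => U b * K b * star (U b) :=
  unitary_conj_compact_continuous_general U hU hstrong K hKcompact hKcont
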